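/- Let Q be an irreducible n×n transition rate matrix with stationary distribution π, D = Diag(γ₁,...,γₙ) with γᵢ > 0, and c ≥ 0. Then πᵀ(D - cQ)⁻¹𝟙 ≥ 1/(Σᵢ πᵢγᵢ), i.e., m_eq(c) is at least the deterministic value k_in/E_π(γ). -/

import Mathlib

open Matrix

def IsIrreducibleRateMatrix {n : ℕ} (Q : Matrix (Fin n) (Fin n) ℝ) : Prop :=
  ∀ S : Finset (Fin n), S.Nonempty → S ≠ Finset.univ → ∃ i ∈ S, ∃ j, j ∉ S ∧ Q i j ≠ 0

/-!
Write `x = (D - cQ)⁻¹ 𝟙` and weight by `w = πγ`. Stationarity of `π` gives `Σ wᵢ xᵢ = 1`,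
and pairing the equation `γx - cQx = 𝟙` with `πx` gives `Σ wᵢ xᵢ² ≤ πᵀx`, because the
stationary Dirichlet form `Σ πᵢ xᵢ (Qx)ᵢ` is nonpositive. Cauchy–Schwarz for the weights `w`
then yields `1 ≤ (Σ wᵢ)(Σ wᵢ xᵢ²) ≤ E_π(γ) · πᵀx`. Invertibility of `D - cQ` comes from strict
diagonal dominance.
-/

open Finset

theorem inv_sum_le_dotProduct_sq_of_dotProduct_eq_one {ι : Type*} [Fintype ι] {w x : ι → ℝ}
    (hw : ∀ i, 0 ≤ w i) (h : w ⬝ᵥ x = 1) : (∑ i, w i)⁻¹ ≤ w ⬝ᵥ x ^ 2 := by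
  have hcs : 1 ≤ (∑ i, w i) * w ⬝ᵥ x ^ 2 := by
    have := sum_sq_le_sum_mul_sum_of_sq_le_mul univ (r := w * x) (f := w) (g := w * x ^ 2)
      (fun i _ => hw i) (fun i _ => mul_nonneg (hw i) (sq_nonneg _))
      (fun i _ => le_of_eq (by simp only [Pi.mul_apply, Pi.pow_apply]; ring))
    rwa [show ∑ i, (w * x) i = 1 from h, one_pow] at this
  have hpos : 0 < ∑ i, w i := by
    refine (sum_nonneg fun i _ => hw i).lt_of_ne fun h0 => ?_
    rw [← h0, zero_mul] at hcs
    linarith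
  exact (inv_le_iff_one_le_mul₀' hpos).2 hcs

section RateMatrix

variable {ι : Type*} [Fintype ι] {Q : Matrix ι ι ℝ}

theorem det_diagonal_sub_smul_ne_zero [DecidableEq ι] (hoff : ∀ i j, i ≠ j → 0 ≤ Q i j)
    (hrow : ∀ i, ∑ j, Q i j = 0) {γ : ι → ℝ} (hγ : ∀ i, 0 < γ i) {c : ℝ} (hc : 0 ≤ c) :
    (diagonal γ - c • Q).det ≠ 0 := by
  refine det_ne_zero_of_sum_row_lt_diag fun k => ?_
  have hoffsum : ∑ j ∈ univ.erase k, Q k j = -Q k k := by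
    rw [eq_neg_iff_add_eq_zero, sum_erase_add _ _ (mem_univ k), hrow k]
  have hQkk : Q k k ≤ 0 := by
    rw [← neg_nonneg, ← hoffsum]
    exact sum_nonneg fun j hj => hoff k j (ne_of_mem_erase hj).symm
  calc ∑ j ∈ univ.erase k, ‖(diagonal γ - c • Q) k j‖
      = ∑ j ∈ univ.erase k, c * Q k j := sum_congr rfl fun j hj => by
        have hkj := (ne_of_mem_erase hj).symm
        rw [Matrix.sub_apply, diagonal_apply_ne _ hkj, Matrix.smul_apply, smul_eq_mul, zero_sub,
          norm_neg, Real.norm_of_nonneg (mul_nonneg hc (hoff k j hkj))]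
    _ = -(c * Q k k) := by rw [← mul_sum, hoffsum, mul_neg]
    _ < γ k - c * Q k k := by linarith [hγ k]
    _ = ‖(diagonal γ - c • Q) k k‖ := by
        rw [Matrix.sub_apply, diagonal_apply_eq, Matrix.smul_apply, smul_eq_mul,
          Real.norm_of_nonneg (by nlinarith [hγ k])]

theorem dotProduct_mul_mulVec_nonpos (hoff : ∀ i j, i ≠ j → 0 ≤ Q i j)
    (hrow : ∀ i, ∑ j, Q i j = 0) {π : ι → ℝ} (hπ : ∀ i, 0 ≤ π i)
    (hπstat : ∀ j, ∑ i, π i * Q i j = 0) (x : ι → ℝ) : (π * x) ⬝ᵥ (Q *ᵥ x) ≤ 0 := by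
  have hleft : ∑ i, ∑ j, π i * Q i j * x i ^ 2 = 0 := by
    simp [← sum_mul, ← mul_sum, hrow]
  have hright : ∑ i, ∑ j, π i * Q i j * x j ^ 2 = 0 := by
    rw [sum_comm]
    simp [← sum_mul, hπstat]
  -- `Σᵢⱼ πᵢ Qᵢⱼ (xᵢ - xⱼ)² = -2 Σᵢ πᵢ xᵢ (Qx)ᵢ`, by zero row sums and stationarity.
  have hexpand : ∑ i, ∑ j, π i * Q i j * (x i - x j) ^ 2 = ∑ i, ∑ j, π i * Q i j * x i ^ 2
      + ∑ i, ∑ j, π i * Q i j * x j ^ 2 - 2 * (π * x) ⬝ᵥ (Q *ᵥ x) := by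
    simp only [dotProduct, mulVec, Pi.mul_apply, mul_sum, ← sum_add_distrib, ← sum_sub_distrib]
    exact sum_congr rfl fun i _ => sum_congr rfl fun j _ => by ring
  have hsq : 0 ≤ ∑ i, ∑ j, π i * Q i j * (x i - x j) ^ 2 :=
    sum_nonneg fun i _ => sum_nonneg fun j _ => by
      rcases eq_or_ne i j with rfl | hij
      · simp
      · exact mul_nonneg (mul_nonneg (hπ i) (hoff i j hij)) (sq_nonneg _)
  linarith

theorem diagonal_sub_smul_mulVec [DecidableEq ι] (γ x : ι → ℝ) (c : ℝ) :
    (diagonal γ - c • Q) *ᵥ x = γ * x - c • Q *ᵥ x := by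
  ext i
  simp [sub_mulVec, smul_mulVec, mulVec_diagonal]

theorem dotProduct_mul_eq_one_of_mulVec_eq_one [DecidableEq ι] {γ π x : ι → ℝ} {c : ℝ}
    (hπsum : ∑ i, π i = 1) (hπstat : ∀ j, ∑ i, π i * Q i j = 0)
    (hx : (diagonal γ - c • Q) *ᵥ x = 1) : (π * γ) ⬝ᵥ x = 1 := by
  have hπQ : π ᵥ* Q = 0 := funext hπstat
  calc (π * γ) ⬝ᵥ x = π ⬝ᵥ (γ * x) - c * (π ᵥ* Q) ⬝ᵥ x := by
        rw [hπQ, zero_dotProduct, mul_zero, sub_zero]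
        simp only [dotProduct, Pi.mul_apply, mul_assoc]
    _ = π ⬝ᵥ ((diagonal γ - c • Q) *ᵥ x) := by
        rw [diagonal_sub_smul_mulVec, dotProduct_sub, dotProduct_smul, smul_eq_mul,
          dotProduct_mulVec]
    _ = 1 := by rw [hx, dotProduct_one, hπsum]

theorem dotProduct_mul_sq_le_of_mulVec_eq_one [DecidableEq ι]
    (hoff : ∀ i j, i ≠ j → 0 ≤ Q i j) (hrow : ∀ i, ∑ j, Q i j = 0) {γ π x : ι → ℝ} {c : ℝ}
    (hπ : ∀ i, 0 ≤ π i) (hπstat : ∀ j, ∑ i, π i * Q i j = 0) (hc : 0 ≤ c)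
    (hx : (diagonal γ - c • Q) *ᵥ x = 1) : (π * γ) ⬝ᵥ x ^ 2 ≤ π ⬝ᵥ x := by
  calc (π * γ) ⬝ᵥ x ^ 2 = (π * x) ⬝ᵥ (γ * x) := by
        simp only [dotProduct, Pi.mul_apply, Pi.pow_apply]
        exact sum_congr rfl fun i _ => by ring
    _ ≤ (π * x) ⬝ᵥ (γ * x) - c * (π * x) ⬝ᵥ (Q *ᵥ x) :=
        (le_sub_self_iff _).2 (mul_nonpos_of_nonneg_of_nonpos hc
          (dotProduct_mul_mulVec_nonpos hoff hrow hπ hπstat x))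
    _ = (π * x) ⬝ᵥ ((diagonal γ - c • Q) *ᵥ x) := by
        rw [diagonal_sub_smul_mulVec, dotProduct_sub, dotProduct_smul, smul_eq_mul]
    _ = π ⬝ᵥ x := by
        rw [hx, dotProduct_one]
        rfl

end RateMatrix

theorem meq_ge_det_general {n : ℕ} (Q : Matrix (Fin n) (Fin n) ℝ) (γ π : Fin n → ℝ)
    (hoff : ∀ i j, i ≠ j → 0 ≤ Q i j) (hrow : ∀ i, ∑ j, Q i j = 0)
    (hγ : ∀ i, 0 < γ i)
    (hπ : ∀ i, 0 ≤ π i) (hπsum : ∑ i, π i = 1)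
    (hπstat : ∀ j, ∑ i, π i * Q i j = 0)
    (c : ℝ) (hc : 0 ≤ c) :
    (∑ i, π i * γ i)⁻¹ ≤ π ⬝ᵥ ((Matrix.diagonal γ - c • Q)⁻¹ *ᵥ fun _ => 1) := by
  set x : Fin n → ℝ := (diagonal γ - c • Q)⁻¹ *ᵥ fun _ => 1 with hxdef
  have hx : (diagonal γ - c • Q) *ᵥ x = 1 := by
    rw [hxdef, mulVec_mulVec,
      mul_nonsing_inv _ (det_diagonal_sub_smul_ne_zero hoff hrow hγ hc).isUnit, one_mulVec]
    rfl
  calc (∑ i, π i * γ i)⁻¹ ≤ (π * γ) ⬝ᵥ x ^ 2 :=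
        inv_sum_le_dotProduct_sq_of_dotProduct_eq_one (fun i => mul_nonneg (hπ i) (hγ i).le)
          (dotProduct_mul_eq_one_of_mulVec_eq_one hπsum hπstat hx)
    _ ≤ π ⬝ᵥ x := dotProduct_mul_sq_le_of_mulVec_eq_one hoff hrow hπ hπstat hc hx

/-- The steady-state mean is at least the deterministic value:
`πᵀ(D - cQ)⁻¹𝟙 ≥ 1/(Σᵢ πᵢγᵢ)`. -/
theorem meq_ge_det {n : ℕ} (Q : Matrix (Fin n) (Fin n) ℝ) (γ π : Fin n → ℝ)
    (hoff : ∀ i j, i ≠ j → 0 ≤ Q i j) (hrow : ∀ i, ∑ j, Q i j = 0)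
    (hirr : IsIrreducibleRateMatrix Q) (hγ : ∀ i, 0 < γ i)
    (hπ : ∀ i, 0 ≤ π i) (hπsum : ∑ i, π i = 1)
    (hπstat : ∀ j, ∑ i, π i * Q i j = 0)
    (c : ℝ) (hc : 0 ≤ c) :
    (∑ i, π i * γ i)⁻¹ ≤ π ⬝ᵥ ((Matrix.diagonal γ - c • Q)⁻¹ *ᵥ fun _ => 1) :=
  meq_ge_det_general Q γ π hoff hrow hγ hπ hπsum hπstat c hc
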